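/- arXiv:1004.3516 — 2 statements merged into one kernel-verified Lean document; each statement's English description precedes it below -/
import Mathlib

section
/- Let F be a finite extension of Q_2 with e = log_q [O_F : 2O_F]. Then 1 + P_F^{2e} is not contained in the set of squares of F*. More precisely, there exists b ∈ O_F* such that 1 + bπ^{2e} is not a square in F*. -/
/-!
Put `a = 2 / π^e`, a unit. If `y² = 1 + b π^{2e}` with `b` integral, then after replacing `y`
by `-y` we may assume `v (y - 1) ≤ v (y + 1)`; since `(y - 1)(y + 1) = b π^{2e}`, this forces
`v (y - 1) ≤ v (π^e)`, and `t = (y - 1) / π^e` is an integral root of `t² + a t = b`.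
In the residue ring `2 = 0`, so `t ↦ t² + ā t` identifies `0` and `ā ≠ 0`; the residue ring being
finite, this map misses some class, necessarily a unit class, and any lift `b` of it gives
`1 + b π^{2e}` that is not a square.
-/

theorem not_surjective_sq_add_mul_of_two_eq_zero {R : Type*} [CommRing R] [Finite R]
    (h2 : (2 : R) = 0) {a : R} (ha : a ≠ 0) : ¬ Function.Surjective fun t : R => t ^ 2 + a * t := by
  rw [← Finite.injective_iff_surjective]
  intro hinj
  exact ha (hinj (by linear_combination a ^ 2 * h2 : a ^ 2 + a * a = 0 ^ 2 + a * 0))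

namespace AbsoluteValue

variable {F : Type*} [Field F] (v : AbsoluteValue F ℝ)

theorem exists_sq_add_div_mul_eq_of_sq_eq_one_add_mul_sq {u x y : F} (hu : u ≠ 0)
    (hx : v x ≤ 1) (hy : y ^ 2 = 1 + x * u ^ 2) : ∃ t, v t ≤ 1 ∧ t ^ 2 + 2 / u * t = x := by
  obtain ⟨w, hw, hle⟩ : ∃ w : F, w ^ 2 = 1 + x * u ^ 2 ∧ v (w - 1) ≤ v (w + 1) := by
    rcases le_total (v (y - 1)) (v (y + 1)) with h | h
    · exact ⟨y, hy, h⟩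
    · refine ⟨-y, by rw [neg_sq, hy], ?_⟩
      rwa [show -y - 1 = -(y + 1) by ring, show -y + 1 = -(y - 1) by ring, v.map_neg, v.map_neg]
  have hprod : v (w - 1) * v (w + 1) ≤ v u * v u := by
    rw [← map_mul, ← map_mul, show (w - 1) * (w + 1) = x * (u * u) by linear_combination hw,
      map_mul, map_mul]
    exact mul_le_of_le_one_left (by positivity) hx
  have hsmall : v (w - 1) ≤ v u := by nlinarith [v.nonneg (w - 1), v.nonneg u]
  refine ⟨(w - 1) / u, ?_, ?_⟩
  · rwa [map_div₀, div_le_one (v.pos hu)]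
  · field_simp
    linear_combination hw

variable (hna : IsNonarchimedean v)

def integer : Subring F where
  carrier := {x | v x ≤ 1}
  mul_mem' {x y} hx hy := by
    simp only [Set.mem_ofPred_eq, map_mul] at hx hy ⊢
    exact mul_le_one₀ hx (v.nonneg y) hy
  one_mem' := by simp
  add_mem' hx hy := (hna _ _).trans (max_le hx hy)
  zero_mem' := by simp
  neg_mem' := by simp

def residueIdeal : Ideal (v.integer hna) where
  carrier := {x | v x < 1}
  add_mem' hx hy := (hna _ _).trans_lt (max_lt hx hy)
  zero_mem' := by simp
  smul_mem' c x hx := by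
    simp only [Set.mem_ofPred_eq, smul_eq_mul, Subring.coe_mul, map_mul] at hx ⊢
    exact mul_lt_one_of_nonneg_of_lt_one_right c.2 (v.nonneg _) hx

abbrev ResidueRing : Type _ := v.integer hna ⧸ v.residueIdeal hna

variable {v hna}

@[simp]
theorem mem_residueIdeal {x : v.integer hna} : x ∈ v.residueIdeal hna ↔ v x < 1 := Iff.rfl

theorem finite_residueRing (K : Type*) [NontriviallyNormedField K] [LocallyCompactSpace K]
    [Algebra K F] [FiniteDimensional K F] (hext : ∀ c : K, v (algebraMap K F c) = ‖c‖) :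
    Finite (v.ResidueRing hna) := by
  -- Under this norm, which is `v` itself, the unit ball is compact and equals `v.integer hna`.
  let _ : NormedField F := v.toNormedField
  let _ : NormedSpace K F := ⟨fun c x => by
    rw [Algebra.smul_def]
    exact (map_mul v _ _).trans_le (by rw [hext]; rfl)⟩
  have : ProperSpace F := FiniteDimensional.proper K F
  obtain ⟨s, hs, hsfin, hcover⟩ := finite_cover_balls_of_compact (isCompact_closedBall (0 : F) 1)
    one_pos
  have := hsfin.to_subtype
  refine Finite.of_surjective (fun c : s => Ideal.Quotient.mk _ ⟨c, ?_⟩) ?_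
  · exact mem_closedBall_zero_iff.mp (hs c.2)
  · rintro ⟨x⟩
    obtain ⟨c, hc, hxc⟩ := Set.mem_iUnion₂.mp (hcover (mem_closedBall_zero_iff.mpr x.2))
    refine ⟨⟨c, hc⟩, Ideal.Quotient.eq.mpr ?_⟩
    rwa [Metric.mem_ball, dist_comm, dist_eq_norm] at hxc

theorem exists_forall_sq_add_mul_ne [Finite (v.ResidueRing hna)] (h2 : v 2 < 1) {a : F}
    (ha : v a = 1) : ∃ x, v x = 1 ∧ ∀ t, v t ≤ 1 → t ^ 2 + a * t ≠ x := by
  let mk := Ideal.Quotient.mk (v.residueIdeal hna)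
  let a' : v.integer hna := ⟨a, ha.le⟩
  have h2' : (2 : v.ResidueRing hna) = 0 :=
    Ideal.Quotient.eq_zero_iff_mem.mpr (show v 2 < 1 from h2)
  have ha' : mk a' ≠ 0 := by
    rw [ne_eq, Ideal.Quotient.eq_zero_iff_mem, mem_residueIdeal, not_lt]
    exact ha.ge
  obtain ⟨c, hc⟩ := not_forall.mp (not_surjective_sq_add_mul_of_two_eq_zero h2' ha')
  obtain ⟨x, rfl⟩ := Ideal.Quotient.mk_surjective c
  have hroot (t : v.integer hna) : mk (t ^ 2 + a' * t) ≠ mk x := fun h =>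
    hc ⟨mk t, by simpa only [map_add, map_mul, map_pow] using h⟩
  refine ⟨x, le_antisymm x.2 (not_lt.mp fun hx => hroot 0 ?_),
    fun t ht h => hroot ⟨t, ht⟩ (congrArg mk (Subtype.ext h))⟩
  simpa using (Ideal.Quotient.eq_zero_iff_mem.mpr hx).symm

theorem exists_not_sq_one_add_mul_sq [Finite (v.ResidueRing hna)] (h2 : v 2 < 1) {u : F}
    (hu : v u = v 2) (hu0 : u ≠ 0) : ∃ b, v b = 1 ∧ ¬ ∃ y, y ^ 2 = 1 + b * u ^ 2 := by
  have ha : v (2 / u) = 1 := by rw [map_div₀, ← hu, div_self (v.pos hu0).ne']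
  obtain ⟨b, hb, hroot⟩ := exists_forall_sq_add_mul_ne h2 ha
  refine ⟨b, hb, fun ⟨y, hy⟩ => ?_⟩
  obtain ⟨t, ht, hteq⟩ := v.exists_sq_add_div_mul_eq_of_sq_eq_one_add_mul_sq hu0 hb.le hy
  exact hroot t ht hteq

end AbsoluteValue

theorem one_add_pow_two_e_not_square_general
    (F : Type*) [Field F] [Algebra ℚ_[2] F] [FiniteDimensional ℚ_[2] F]
    (v : AbsoluteValue F ℝ)
    (hna : ∀ x y : F, v (x + y) ≤ max (v x) (v y))
    (hext : ∀ x : ℚ_[2], v (algebraMap ℚ_[2] F x) = ‖x‖)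
    (q : ℕ)
    (π : F) (hπ : v π = (q : ℝ)⁻¹)
    (e : ℕ) (he : v 2 = (q : ℝ) ^ (-(e : ℤ))) :
    (¬ ∀ x : F, v (x - 1) ≤ (q : ℝ) ^ (-(2 * e : ℤ)) → ∃ y : F, y ^ 2 = x) ∧
    ∃ b : F, v b = 1 ∧ ¬ ∃ y : F, y ^ 2 = 1 + b * π ^ (2 * e) := by
  have hv2 : v 2 = 2⁻¹ := by
    simpa using (map_ofNat (algebraMap ℚ_[2] F) 2 ▸ hext 2).trans (Padic.norm_p (p := 2))
  have hπe : v (π ^ e) = v 2 := by rw [map_pow, hπ, he, zpow_neg, zpow_natCast, inv_pow]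
  have hπe0 : π ^ e ≠ 0 := fun h => by norm_num [h, hv2] at hπe
  have := AbsoluteValue.finite_residueRing (hna := hna) ℚ_[2] hext
  obtain ⟨b, hb, hns⟩ := AbsoluteValue.exists_not_sq_one_add_mul_sq (hna := hna)
    (by norm_num [hv2]) hπe hπe0
  rw [← pow_mul, mul_comm e] at hns
  refine ⟨fun hall => hns (hall _ ?_), b, hb, hns⟩
  rw [add_sub_cancel_left, map_mul, hb, one_mul, map_pow, hπ, inv_pow, ← zpow_natCast,
    ← zpow_neg]
  push_cast
  exact le_rfl

/-- Let `F` be a finite extension of `ℚ_2`, with nonarchimedean absolute value `v`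
extending the `2`-adic norm, uniformizer `π` with `v π = q⁻¹`, and
`e` defined by `v 2 = q^{-e}`.  Then `1 + P_F^{2e}` is not contained in the set of
squares of `F^*`; more precisely there exists a unit `b` such that `1 + b π^{2e}`
is not a square in `F^*`. -/
theorem one_add_pow_two_e_not_square
    (F : Type*) [Field F] [Algebra ℚ_[2] F] [FiniteDimensional ℚ_[2] F]
    (v : AbsoluteValue F ℝ)
    (hna : ∀ x y : F, v (x + y) ≤ max (v x) (v y))
    (hext : ∀ x : ℚ_[2], v (algebraMap ℚ_[2] F x) = ‖x‖)
    (q : ℕ) (hq : 1 < q)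
    (π : F) (hπ : v π = (q : ℝ)⁻¹)
    (hdisc : ∀ x : F, x ≠ 0 → ∃ n : ℤ, v x = (q : ℝ) ^ n)
    (e : ℕ) (he : v 2 = (q : ℝ) ^ (-(e : ℤ))) :
    (¬ ∀ x : F, v (x - 1) ≤ (q : ℝ) ^ (-(2 * e : ℤ)) → ∃ y : F, y ^ 2 = x) ∧
    ∃ b : F, v b = 1 ∧ ¬ ∃ y : F, y ^ 2 = 1 + b * π ^ (2 * e) :=
  one_add_pow_two_e_not_square_general F v hna hext q π hπ e he
end

section
/- Let F be a p-adic field of odd residual characteristic with uniformizer π, residue field cardinality q, and quadratic character χ of O_F*. Define ξ_{α,χ}: F* → {±1} by ξ_{α,χ}(επ^{2n}) = χ(ε)(π,π)_F^n and ξ_{α,χ}(επ^{2n+1}) = αχ(ε)(π,π)_F^n(ε,π)_F for ε ∈ O_F*, n ∈ Z, α ∈ {±1}. Then ξ_{α,χ} satisfies ξ_{α,χ}(ab) = ξ_{α,χ}(a)ξ_{α,χ}(b)(a,b)_F for all a,b ∈ F*. -/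
/-- Let `F` be a `p`-adic field of odd residual characteristic (encoded by the
fact that the Hilbert symbol is trivial on pairs of units), `π` a uniformizer,
`χ` a quadratic character of the unit group and `α ∈ {±1}`.  The function
`ξ_{α,χ}` defined by `ξ(ε π^{2n}) = χ(ε)(π,π)^n` and
`ξ(ε π^{2n+1}) = α χ(ε)(π,π)^n (ε,π)` satisfies
`ξ(ab) = ξ(a) ξ(b) (a,b)_F` for all `a, b ∈ F^*`. -/
theorem xi_alpha_chi_cocycle (F : Type*) [Field F]
    (v : F → ℝ) (hv : ∀ x y : F, v (x * y) = v x * v y)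
    (q : ℕ) (hq : 1 < q)
    (π : Fˣ) (hπ : v (π : F) = (q : ℝ)⁻¹)
    (H : Fˣ → Fˣ → ℤˣ)
    (Hmul₁ : ∀ a b c : Fˣ, H (a * b) c = H a c * H b c)
    (Hmul₂ : ∀ a b c : Fˣ, H a (b * c) = H a b * H a c)
    (Hneg : ∀ a : Fˣ, H a (-a) = 1)
    (Hunit : ∀ a b : Fˣ, v (a : F) = 1 → v (b : F) = 1 → H a b = 1)
    (χ : Fˣ → ℤˣ)
    (hχmul : ∀ a b : Fˣ, v (a : F) = 1 → v (b : F) = 1 → χ (a * b) = χ a * χ b)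
    (α : ℤˣ)
    (ξ : Fˣ → ℤˣ)
    (hξeven : ∀ (ε : Fˣ) (n : ℤ), v (ε : F) = 1 →
      ξ (ε * π ^ (2 * n)) = χ ε * (H π π) ^ n)
    (hξodd : ∀ (ε : Fˣ) (n : ℤ), v (ε : F) = 1 →
      ξ (ε * π ^ (2 * n + 1)) = α * χ ε * (H π π) ^ n * H ε π)
    (hdecomp : ∀ x : Fˣ, ∃ (ε : Fˣ) (n : ℤ), v (ε : F) = 1 ∧ x = ε * π ^ n) :
    ∀ a b : Fˣ, ξ (a * b) = ξ a * ξ b * H a b := by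
  -- every element of ℤˣ squares to 1
  have hsq : ∀ g : ℤˣ, g * g = 1 := fun g => by
    rcases Int.units_eq_one_or g with rfl | rfl <;> decide
  have hsq' : ∀ g x : ℤˣ, g * (g * x) = x := fun g x => by
    rw [← mul_assoc, hsq, one_mul]
  have hz2 : ∀ (g : ℤˣ) (k : ℤ), g ^ (2 * k) = 1 := fun g k => by
    rw [zpow_mul]
    have h2 : g ^ (2 : ℤ) = 1 := by
      rw [show (2 : ℤ) = 1 + 1 by norm_num, zpow_add, zpow_one, hsq]
    rw [h2, one_zpow]
  have hz21 : ∀ (g : ℤˣ) (k : ℤ), g ^ (2 * k + 1) = g := fun g k => by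
    rw [zpow_add, hz2, one_mul, zpow_one]
  -- H is a homomorphism in each variable, hence commutes with zpow
  have Hone₁ : ∀ b : Fˣ, H 1 b = 1 := fun b => by
    have h := Hmul₁ 1 1 b
    rw [one_mul] at h
    rw [h, hsq]
  have Hone₂ : ∀ a : Fˣ, H a 1 = 1 := fun a => by
    have h := Hmul₂ a 1 1
    rw [one_mul] at h
    rw [h, hsq]
  have Hzpow₁ : ∀ (a b : Fˣ) (k : ℤ), H (a ^ k) b = (H a b) ^ k := by
    intro a b k
    let f : Fˣ →* ℤˣ :=
      { toFun := fun x => H x b, map_one' := Hone₁ b,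
        map_mul' := fun x y => Hmul₁ x y b }
    exact map_zpow f a k
  have Hzpow₂ : ∀ (a b : Fˣ) (k : ℤ), H a (b ^ k) = (H a b) ^ k := by
    intro a b k
    let f : Fˣ →* ℤˣ :=
      { toFun := fun x => H a x, map_one' := Hone₂ a,
        map_mul' := fun x y => Hmul₂ a x y }
    exact map_zpow f b k
  -- symmetry of H
  have Hsymm : ∀ a b : Fˣ, H a b = H b a := by
    intro a b
    have h1 : H (a * b) (-(a * b)) = 1 := Hneg _
    have ha : H a (-(a * b)) = H a b := by
      rw [show -(a * b) = (-a) * b by rw [neg_mul], Hmul₂, Hneg, one_mul]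
    have hb : H b (-(a * b)) = H b a := by
      rw [show -(a * b) = a * (-b) by rw [mul_neg], Hmul₂, Hneg, mul_one]
    have h2 := Hmul₁ a b (-(a * b))
    rw [ha, hb, h1] at h2
    calc H a b = H a b * (H b a * H b a) := by rw [hsq, mul_one]
      _ = (H a b * H b a) * H b a := by rw [mul_assoc]
      _ = H b a := by rw [← h2, one_mul]
  intro a b
  obtain ⟨ε₁, m, hε₁, rfl⟩ := hdecomp a
  obtain ⟨ε₂, n, hε₂, rfl⟩ := hdecomp b
  have hε : v ((ε₁ * ε₂ : Fˣ) : F) = 1 := by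
    rw [Units.val_mul, hv, hε₁, hε₂, one_mul]
  have hχ := hχmul ε₁ ε₂ hε₁ hε₂
  have hHε : H (ε₁ * ε₂) π = H ε₁ π * H ε₂ π := Hmul₁ ε₁ ε₂ π
  have hprod : ε₁ * π ^ m * (ε₂ * π ^ n) = (ε₁ * ε₂) * π ^ (m + n) := by
    rw [mul_mul_mul_comm, ← zpow_add]
  have hH : H (ε₁ * π ^ m) (ε₂ * π ^ n)
      = (H ε₁ π) ^ n * (H ε₂ π) ^ m * (H π π) ^ (m * n) := by
    rw [Hmul₁, Hmul₂, Hmul₂, Hunit ε₁ ε₂ hε₁ hε₂, one_mul, Hzpow₂,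
      Hzpow₁, Hzpow₁, Hsymm π ε₂, Hzpow₂, ← zpow_mul, mul_comm n m, mul_assoc]
  rw [hprod, hH]
  rcases Int.even_or_odd m with ⟨k, hk⟩ | ⟨k, hk⟩ <;>
    rcases Int.even_or_odd n with ⟨l, hl⟩ | ⟨l, hl⟩
  · rw [show m = 2 * k by omega, show n = 2 * l by omega,
      show 2 * k + 2 * l = 2 * (k + l) by ring,
      show (2 * k) * (2 * l) = 2 * (k * (2 * l)) by ring,
      hξeven ε₁ k hε₁, hξeven ε₂ l hε₂, hξeven (ε₁ * ε₂) (k + l) hε,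
      hχ, hz2, hz2, hz2, zpow_add]
    simp [mul_comm, mul_left_comm, mul_assoc]
  · rw [show m = 2 * k by omega, show n = 2 * l + 1 from hl,
      show 2 * k + (2 * l + 1) = 2 * (k + l) + 1 by ring,
      show (2 * k) * (2 * l + 1) = 2 * (k * (2 * l + 1)) by ring,
      hξeven ε₁ k hε₁, hξodd ε₂ l hε₂, hξodd (ε₁ * ε₂) (k + l) hε,
      hχ, hHε, hz21, hz2, hz2, zpow_add]
    simp [mul_comm, mul_left_comm, mul_assoc]
  · rw [show m = 2 * k + 1 from hk, show n = 2 * l by omega,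
      show (2 * k + 1) + 2 * l = 2 * (k + l) + 1 by ring,
      show (2 * k + 1) * (2 * l) = 2 * ((2 * k + 1) * l) by ring,
      hξodd ε₁ k hε₁, hξeven ε₂ l hε₂, hξodd (ε₁ * ε₂) (k + l) hε,
      hχ, hHε, hz2, hz21, hz2, zpow_add]
    simp [mul_comm, mul_left_comm, mul_assoc]
  · rw [show m = 2 * k + 1 from hk, show n = 2 * l + 1 from hl,
      show (2 * k + 1) + (2 * l + 1) = 2 * (k + l + 1) by ring,
      show (2 * k + 1) * (2 * l + 1) = 2 * (2 * k * l + k + l) + 1 by ring,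
      hξodd ε₁ k hε₁, hξodd ε₂ l hε₂, hξeven (ε₁ * ε₂) (k + l + 1) hε,
      hχ, hz21, hz21, hz21, zpow_add, zpow_add, zpow_one]
    simp [mul_comm, mul_left_comm, mul_assoc, hsq, hsq']
end
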